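/- Suppose a double complex D^{*,*} of R-modules has exact rows. Then its right truncated totalisation rtTot(D), with n-th term Π_{p≤0} D^{p,n-p} ⊕ ⊕_{p>0} D^{p,n-p} and differential Σ_{p≤k} a_p z^p ↦ Σ_{p≤k+1} (d_h(a_{p-1}) + d_v(a_p)) z^p, is acyclic. -/

import Mathlib

/-- Transport along equalities of indices of a doubly indexed family of modules. -/
def castM {R : Type} [Ring R] (D : ℤ → ℤ → Type)
    [∀ p q, AddCommGroup (D p q)] [∀ p q, Module R (D p q)] :
    ∀ {p q p' q' : ℤ}, p = p' → q = q' → (D p q →ₗ[R] D p' q')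
  | _, _, _, _, rfl, rfl => LinearMap.id

/-- The differential `d_h + d_v` of the totalisation of a double complex, with `n`-th term
the full product `∀ p, D p (n - p)`.  Restricted to elements whose support is bounded above
(in `p`) this is the differential of the right truncated totalisation `rtTot`. -/
def totd {R : Type} [Ring R] (D : ℤ → ℤ → Type)
    [∀ p q, AddCommGroup (D p q)] [∀ p q, Module R (D p q)]
    (dh : ∀ p q, D p q →ₗ[R] D (p + 1) q) (dv : ∀ p q, D p q →ₗ[R] D p (q + 1))
    (n : ℤ) : (∀ p, D p (n - p)) →ₗ[R] (∀ p, D p (n + 1 - p)) :=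
  LinearMap.pi fun p =>
    (castM D (by omega : p - 1 + 1 = p) (by omega : n - (p - 1) = n + 1 - p)).comp
        ((dh (p - 1) (n - (p - 1))).comp (LinearMap.proj (p - 1)))
      + (castM D rfl (by omega : n - p + 1 = n + 1 - p)).comp
        ((dv p (n - p)).comp (LinearMap.proj p))

/-!
Solve `totd b = a` one component at a time: it reads `d_h b (p - 1) + d_v b p = a p`. Put
`b p = 0` for `p` beyond the support of `a` and construct `b (p - 1)` from `b p` by descending
induction on `p`. The defect `a p - d_v b p` is a `d_h`-cocycle, because `a` is a cocycle,
`d_v² = 0`, `d_h d_v = - d_v d_h`, and the equation already holds in component `p + 1`. By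
exactness of the rows it is therefore `d_h` of some `b (p - 1)`. Right truncation is what lets
the induction start.
-/

section Staircase

/- `X p`, `Y p`, `Z p` stand for the `p`-th components of a totalisation in three consecutive
degrees, `h` and `v` for its horizontal and vertical parts; `stairDiff h v b p` is then the
`(p + 1)`-st component of the differential of `b`. -/
variable {X Y Z : ℤ → Type*} [∀ p, AddCommGroup (X p)] [∀ p, AddCommGroup (Y p)]
  [∀ p, AddCommGroup (Z p)]
  (hX : ∀ p, X p →+ Y (p + 1)) (vX : ∀ p, X p →+ Y p)
  (hY : ∀ p, Y p →+ Z (p + 1)) (vY : ∀ p, Y p →+ Z p)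

def stairDiff (b : ∀ p, X p) (p : ℤ) : Y (p + 1) :=
  hX p (b p) + vX (p + 1) (b (p + 1))

open Classical in
noncomputable def rowLift (p : ℤ) (y : Y (p + 1)) : X p :=
  if h : ∃ x, hX p x = y then h.choose else 0

theorem apply_rowLift {p : ℤ} {y : Y (p + 1)} (h : ∃ x, hX p x = y) :
    hX p (rowLift hX p y) = y := by
  rw [rowLift, dif_pos h]
  exact h.choose_spec

noncomputable def staircaseLift (a : ∀ p, Y p) (k : ℤ) (p : ℤ) : X p :=
  if k < p then 0
  else rowLift hX p (a (p + 1) - vX (p + 1) (staircaseLift a k (p + 1)))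
termination_by (k + 1 - p).toNat
decreasing_by omega

theorem staircaseLift_of_lt (a : ∀ p, Y p) {k p : ℤ} (h : k < p) :
    staircaseLift hX vX a k p = 0 := by
  rw [staircaseLift, if_pos h]

theorem staircaseLift_of_le (a : ∀ p, Y p) {k p : ℤ} (h : p ≤ k) :
    staircaseLift hX vX a k p
      = rowLift hX p (a (p + 1) - vX (p + 1) (staircaseLift hX vX a k (p + 1))) := by
  rw [staircaseLift, if_neg (not_lt.mpr h)]

variable {hX vX hY vY}

theorem stairDiff_staircaseLift
    (hvv : ∀ p x, vY p (vX p x) = 0)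
    (hanti : ∀ p x, hY p (vX p x) + vY (p + 1) (hX p x) = 0)
    (hexact : ∀ p (y : Y (p + 1)), hY (p + 1) y = 0 → ∃ x, hX p x = y)
    {a : ∀ p, Y p} {k : ℤ} (ha : ∀ p > k, a p = 0) (hcoc : ∀ p, stairDiff hY vY a p = 0)
    (p : ℤ) :
    stairDiff hX vX (staircaseLift hX vX a k) p = a (p + 1) := by
  rw [stairDiff]
  by_cases hp : k < p
  · rw [staircaseLift_of_lt hX vX a hp, staircaseLift_of_lt hX vX a (by omega), map_zero,
      map_zero, add_zero, ha (p + 1) (by omega)]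
  rw [staircaseLift_of_le hX vX a (not_lt.mp hp)]
  set b := staircaseLift hX vX a k
  have ih : hX (p + 1) (b (p + 1)) + vX (p + 1 + 1) (b (p + 1 + 1)) = a (p + 1 + 1) :=
    stairDiff_staircaseLift hvv hanti hexact ha hcoc (p + 1)
  have hcyc : hY (p + 1) (a (p + 1) - vX (p + 1) (b (p + 1))) = 0 := by
    have hvb : vY (p + 1 + 1) (hX (p + 1) (b (p + 1)) - a (p + 1 + 1)) = 0 := by
      rw [← ih, sub_add_cancel_left, map_neg, hvv, neg_zero]
    rw [map_sub, eq_neg_of_add_eq_zero_left (hcoc (p + 1)),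
      eq_neg_of_add_eq_zero_left (hanti (p + 1) (b (p + 1))), ← hvb, map_sub]
    abel
  rw [apply_rowLift hX (hexact p _ hcyc), sub_add_cancel]
termination_by (k + 1 - p).toNat
decreasing_by omega

theorem exists_stairDiff_eq
    (hvv : ∀ p x, vY p (vX p x) = 0)
    (hanti : ∀ p x, hY p (vX p x) + vY (p + 1) (hX p x) = 0)
    (hexact : ∀ p (y : Y (p + 1)), hY (p + 1) y = 0 → ∃ x, hX p x = y)
    {a : ∀ p, Y p} {k : ℤ} (ha : ∀ p > k, a p = 0) (hcoc : ∀ p, stairDiff hY vY a p = 0) :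
    ∃ b : ∀ p, X p, (∀ p > k, b p = 0) ∧ ∀ p, stairDiff hX vX b p = a (p + 1) :=
  ⟨staircaseLift hX vX a k, fun _ hp => staircaseLift_of_lt hX vX a hp,
    stairDiff_staircaseLift hvv hanti hexact ha hcoc⟩

end Staircase

section Totalisation

variable {R : Type} [Ring R] (D : ℤ → ℤ → Type)
  [∀ p q, AddCommGroup (D p q)] [∀ p q, Module R (D p q)]

theorem castM_castM {p q p' q' p'' q'' : ℤ} (h₁ : p = p') (h₁' : q = q')
    (h₂ : p' = p'') (h₂' : q' = q'') (x : D p q) :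
    castM (R := R) D h₂ h₂' (castM (R := R) D h₁ h₁' x)
      = castM (R := R) D (h₁.trans h₂) (h₁'.trans h₂') x := by
  subst h₁ h₁' h₂ h₂'; rfl

theorem castM_eq_zero_iff {p q p' q' : ℤ} (h : p = p') (h' : q = q') {x : D p q} :
    castM (R := R) D h h' x = 0 ↔ x = 0 := by
  subst h h'; rfl

theorem map_castM {c c' : ℤ → ℤ} (G : ∀ p q, D p q →ₗ[R] D (c p) (c' q)) {p q q' : ℤ}
    (h : q = q') (x : D p q) :
    G p q' (castM (R := R) D rfl h x) = castM (R := R) D rfl (congrArg c' h) (G p q x) := by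
  subst h; rfl

def totHoriz (dh : ∀ p q, D p q →ₗ[R] D (p + 1) q) (n p : ℤ) :
    D p (n - p) →+ D (p + 1) (n + 1 - (p + 1)) :=
  ((castM D rfl (by omega)).comp (dh p (n - p))).toAddMonoidHom

def totVert (dv : ∀ p q, D p q →ₗ[R] D p (q + 1)) (n p : ℤ) :
    D p (n - p) →+ D p (n + 1 - p) :=
  ((castM D rfl (by omega)).comp (dv p (n - p))).toAddMonoidHom

variable {D}

theorem totHoriz_apply (dh : ∀ p q, D p q →ₗ[R] D (p + 1) q) (n p : ℤ) (x : D p (n - p)) :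
    totHoriz D dh n p x = castM (R := R) D rfl (by omega) (dh p (n - p) x) :=
  rfl

theorem totVert_apply (dv : ∀ p q, D p q →ₗ[R] D p (q + 1)) (n p : ℤ) (x : D p (n - p)) :
    totVert D dv n p x = castM (R := R) D rfl (by omega) (dv p (n - p) x) :=
  rfl

theorem totd_apply_add_one (dh : ∀ p q, D p q →ₗ[R] D (p + 1) q)
    (dv : ∀ p q, D p q →ₗ[R] D p (q + 1)) (n p : ℤ) (b : ∀ p, D p (n - p)) :
    totd D dh dv n b (p + 1) = stairDiff (totHoriz D dh n) (totVert D dv n) b p := by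
  have hshift : ∀ i, i = p → ∀ (e : i + 1 = p + 1) (e' : n - i = n + 1 - (p + 1)),
      castM (R := R) D e e' (dh i (n - i) (b i)) = totHoriz D dh n p (b p) := by
    rintro i rfl _ _
    rfl
  exact congrArg (· + _) (hshift _ (add_sub_cancel_right p 1) _ _)

theorem totVert_totVert (dv : ∀ p q, D p q →ₗ[R] D p (q + 1))
    (hdv : ∀ p q (x : D p q), dv p (q + 1) (dv p q x) = 0) (n p : ℤ) (x : D p (n - p)) :
    totVert D dv (n + 1) p (totVert D dv n p x) = 0 := by
  rw [totVert_apply, totVert_apply, map_castM D dv, castM_castM, hdv, map_zero]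

theorem totHoriz_totVert_add_totVert_totHoriz (dh : ∀ p q, D p q →ₗ[R] D (p + 1) q)
    (dv : ∀ p q, D p q →ₗ[R] D p (q + 1))
    (hanti : ∀ p q (x : D p q), dh p (q + 1) (dv p q x) + dv (p + 1) q (dh p q x) = 0)
    (n p : ℤ) (x : D p (n - p)) :
    totHoriz D dh (n + 1) p (totVert D dv n p x)
      + totVert D dv (n + 1) (p + 1) (totHoriz D dh n p x) = 0 := by
  rw [totHoriz_apply, totVert_apply, totVert_apply, totHoriz_apply, map_castM D dh,
    map_castM D dv, castM_castM, castM_castM, ← map_add, hanti, map_zero]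

theorem exists_totHoriz_eq (dh : ∀ p q, D p q →ₗ[R] D (p + 1) q)
    (hrows : ∀ p q (x : D (p + 1) q), dh (p + 1) q x = 0 → ∃ y : D p q, dh p q y = x)
    (n p : ℤ) (y : D (p + 1) (n + 1 - (p + 1))) (hy : totHoriz D dh (n + 1) (p + 1) y = 0) :
    ∃ x, totHoriz D dh n p x = y := by
  obtain ⟨z, hz⟩ := hrows p _ y ((castM_eq_zero_iff D _ _).mp hy)
  refine ⟨castM (R := R) D rfl (by omega) z, ?_⟩
  rw [totHoriz_apply, map_castM D dh, castM_castM, hz]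
  rfl

end Totalisation

theorem rtTot_acyclic_of_exact_rows_general (R : Type) [Ring R]
    (D : ℤ → ℤ → Type)
    [∀ p q, AddCommGroup (D p q)] [∀ p q, Module R (D p q)]
    (Dh : ∀ p q, D p q →ₗ[R] D (p + 1) q) (Dv : ∀ p q, D p q →ₗ[R] D p (q + 1))
    (hDvv : ∀ p q (x : D p q), Dv p (q + 1) (Dv p q x) = 0)
    (hDanti : ∀ p q (x : D p q), Dh p (q + 1) (Dv p q x) + Dv (p + 1) q (Dh p q x) = 0)
    -- the rows are exact:
    (hrows : ∀ p q (x : D (p + 1) q), Dh (p + 1) q x = 0 → ∃ y : D p q, Dh p q y = x) :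
    ∀ (n : ℤ) (a : ∀ p, D p (n + 1 - p)),
      (∃ k : ℤ, ∀ p > k, a p = 0) →
      totd D Dh Dv (n + 1) a = 0 →
      ∃ b : ∀ p, D p (n - p), (∃ k : ℤ, ∀ p > k, b p = 0) ∧ totd D Dh Dv n b = a := by
  rintro n a ⟨k, ha⟩ hcoc
  obtain ⟨b, hb, hdb⟩ := exists_stairDiff_eq (totVert_totVert Dv hDvv n)
    (totHoriz_totVert_add_totVert_totHoriz Dh Dv hDanti n) (exists_totHoriz_eq Dh hrows n) ha
    (fun p => (totd_apply_add_one Dh Dv (n + 1) p a).symm.trans (congrFun hcoc (p + 1)))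
  refine ⟨b, ⟨k, hb⟩, funext fun p => ?_⟩
  obtain ⟨p, rfl⟩ : ∃ p', p = p' + 1 := ⟨p - 1, by omega⟩
  rw [totd_apply_add_one, hdb]

/-- Suppose a double complex `D` of `R`-modules (anticommuting differentials squaring to
zero) has exact rows.  Then its right truncated totalisation — whose `n`-th term consists of
the elements of `∀ p, D p (n - p)` which vanish for `p` sufficiently large — is acyclic:
every right-truncated cocycle is the boundary of a right-truncated element. -/
theorem rtTot_acyclic_of_exact_rows (R : Type) [Ring R]
    (D : ℤ → ℤ → Type)
    [∀ p q, AddCommGroup (D p q)] [∀ p q, Module R (D p q)]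
    (Dh : ∀ p q, D p q →ₗ[R] D (p + 1) q) (Dv : ∀ p q, D p q →ₗ[R] D p (q + 1))
    (hDhh : ∀ p q (x : D p q), Dh (p + 1) q (Dh p q x) = 0)
    (hDvv : ∀ p q (x : D p q), Dv p (q + 1) (Dv p q x) = 0)
    (hDanti : ∀ p q (x : D p q), Dh p (q + 1) (Dv p q x) + Dv (p + 1) q (Dh p q x) = 0)
    -- the rows are exact:
    (hrows : ∀ p q (x : D (p + 1) q), Dh (p + 1) q x = 0 → ∃ y : D p q, Dh p q y = x) :
    ∀ (n : ℤ) (a : ∀ p, D p (n + 1 - p)),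
      (∃ k : ℤ, ∀ p > k, a p = 0) →
      totd D Dh Dv (n + 1) a = 0 →
      ∃ b : ∀ p, D p (n - p), (∃ k : ℤ, ∀ p > k, b p = 0) ∧ totd D Dh Dv n b = a :=
  rtTot_acyclic_of_exact_rows_general R D Dh Dv hDvv hDanti hrows
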